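/- arXiv:1607.00261 — 2 statements merged into one kernel-verified Lean document; each statement's English description precedes it below -/
import Mathlib

section
/- Let x̂, ẑ ∈ ℝ³ be orthonormal vectors, and let (p_m, k_m, n_m)_m be a finite family with p_m ≥ 0, Σ_m p_m = 1, k_m ∈ [−1,1], and n_m ∈ ℝ³ unit vectors. For each m set r_m = (n_m·x̂)·n_m + √(1 − k_m²)·(x̂ − (n_m·x̂)·n_m). Then Σ_m p_m·h(|k_m·(n_m·ẑ)|) ≥ h(√(1 − (Σ_m p_m·‖r_m‖)²)). -/
open Matrix
open scoped ComplexOrder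

noncomputable section

/-- The binary-entropy-type function `h(x) = -((1+x)/2)·log₂((1+x)/2) - ((1-x)/2)·log₂((1-x)/2)`
(with the convention `0·log₂ 0 = 0`, automatic since `Real.logb 2 0 = 0`). -/
def hFun (x : ℝ) : ℝ :=
  -(((1 + x) / 2) * Real.logb 2 ((1 + x) / 2)) - ((1 - x) / 2) * Real.logb 2 ((1 - x) / 2)

/-- `g : [0,1] → [0,1]` is the inverse of `h` on `[0,1]`. -/
def gFun : ℝ → ℝ := Function.invFunOn hFun (Set.Icc 0 1)

/-- The (real) quadratic form `⟨v|M|v⟩`. -/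
def qform {d : ℕ} (M : Matrix (Fin d) (Fin d) ℂ) (v : Fin d → ℂ) : ℝ :=
  (star v ⬝ᵥ M.mulVec v).re

/-- `v` is an orthonormal basis (family) of `ℂ^d`. -/
def IsONB {d : ℕ} (v : Fin d → Fin d → ℂ) : Prop :=
  ∀ i j, star (v i) ⬝ᵥ v j = if i = j then 1 else 0

/-- A POVM: a finite family of positive semidefinite matrices summing to the identity. -/
def IsPOVM {d : ℕ} {ι : Type*} [Fintype ι] (M : ι → Matrix (Fin d) (Fin d) ℂ) : Prop :=
  (∀ m, (M m).PosSemidef) ∧ ∑ m, M m = 1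

/-- A density matrix: positive semidefinite with trace 1. -/
def IsDensity {d : ℕ} (ρ : Matrix (Fin d) (Fin d) ℂ) : Prop :=
  ρ.PosSemidef ∧ ρ.trace = 1

/-- The noise `N(M,A) = -Σ_{m,a} p(m,a)·log₂(p(m,a)/p(m))` with `p(m,a) = (1/d)·⟨a|M_m|a⟩`
and `p(m) = (1/d)·Tr[M_m]`, for an observable `A` with orthonormal eigenbasis `v`. -/
def noise {d : ℕ} {ι : Type*} [Fintype ι] (M : ι → Matrix (Fin d) (Fin d) ℂ)
    (v : Fin d → Fin d → ℂ) : ℝ :=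
  -∑ m, ∑ a, ((1 / (d : ℝ)) * qform (M m) (v a)) *
      Real.logb 2 (((1 / (d : ℝ)) * qform (M m) (v a)) / ((1 / (d : ℝ)) * (M m).trace.re))

/-- `H(A|ρ) = -Σ_a ⟨a|ρ|a⟩·log₂⟨a|ρ|a⟩` for an observable with orthonormal eigenbasis `v`. -/
def Hobs {d : ℕ} (v : Fin d → Fin d → ℂ) (ρ : Matrix (Fin d) (Fin d) ℂ) : ℝ :=
  -∑ a, qform ρ (v a) * Real.logb 2 (qform ρ (v a))

/-- Conditional Shannon entropy `H(X|Y) = -Σ_{x,y} p(x,y)·log₂(p(x,y)/p(y))` of a finite joint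
distribution, conditioning on the second variable. -/
def condEnt {X Y : Type*} [Fintype X] [Fintype Y] (p : X → Y → ℝ) : ℝ :=
  -∑ x, ∑ y, p x y * Real.logb 2 (p x y / ∑ x', p x' y)

/-- Pauli matrix σ_x. -/
def σx : Matrix (Fin 2) (Fin 2) ℂ := !![0, 1; 1, 0]
/-- Pauli matrix σ_y. -/
def σy : Matrix (Fin 2) (Fin 2) ℂ := !![0, -Complex.I; Complex.I, 0]
/-- Pauli matrix σ_z. -/
def σz : Matrix (Fin 2) (Fin 2) ℂ := !![1, 0; 0, -1]

/-- `v·σ = v₁σ_x + v₂σ_y + v₃σ_z` for `v ∈ ℝ³`. -/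
def vecσ (v : Fin 3 → ℝ) : Matrix (Fin 2) (Fin 2) ℂ :=
  (v 0 : ℂ) • σx + (v 1 : ℂ) • σy + (v 2 : ℂ) • σz

/-- The canonical orthonormal eigenbasis of σ_z. -/
def basisZ : Fin 2 → Fin 2 → ℂ := fun i j => if i = j then 1 else 0

/-- The canonical orthonormal eigenbasis `|±x⟩` of σ_x. -/
def basisX : Fin 2 → Fin 2 → ℂ := fun i =>
  ![((1 / Real.sqrt 2 : ℝ) : ℂ),
    if i = 0 then ((1 / Real.sqrt 2 : ℝ) : ℂ) else (-(1 / Real.sqrt 2 : ℝ) : ℂ)]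

/-- Eigenvalues `+1, -1` of a (nondegenerate) Pauli observable. -/
def pmEig : Fin 2 → ℂ := fun i => if i = 0 then 1 else -1

end

/-! Put `f t = h (√(1 - t²))` (`hSqrt` below). Bessel's inequality for the orthonormal pair
`x̂, ẑ` gives `‖r_m‖² = 1 - k_m² (1 - (n_m·x̂)²) ≤ 1 - (k_m (n_m·ẑ))² =: t_m²`. On `[0,1]` the
function `f` is nondecreasing (`h` is antitone) and convex: with `s = √(1 - t²)` one finds
`f'' = (log (1 + s) - log (1 - s) - 2 s) / (2 s³ log 2) ≥ 0` from the series of `artanh`. Hence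
`f (Σ p_m ‖r_m‖) ≤ f (Σ p_m t_m) ≤ Σ p_m f t_m = Σ p_m h |k_m (n_m·ẑ)|` by Jensen's inequality. -/

open Real Set

lemma hFun_eq_binEntropy (x : ℝ) : hFun x = binEntropy ((1 + x) / 2) / log 2 := by
  have h : 1 - (1 + x) / 2 = (1 - x) / 2 := by ring
  rw [hFun, binEntropy, h, log_inv, log_inv, logb, logb]
  ring

lemma continuous_hFun : Continuous hFun := by
  rw [funext hFun_eq_binEntropy]
  fun_prop

lemma hFun_antitoneOn : AntitoneOn hFun (Icc 0 1) := by
  have mem : ∀ x ∈ Icc (0 : ℝ) 1, (1 + x) / 2 ∈ Icc 2⁻¹ 1 := fun x hx =>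
    ⟨by linarith [hx.1], by linarith [hx.2]⟩
  intro a ha b hb hab
  rw [hFun_eq_binEntropy, hFun_eq_binEntropy]
  exact div_le_div_of_nonneg_right
    (binEntropy_strictAntiOn.antitoneOn (mem a ha) (mem b hb) (by linarith))
    (log_pos one_lt_two).le

lemma hasDerivAt_hFun {x : ℝ} (hx : x ∈ Ioo (-1) 1) :
    HasDerivAt hFun (-(log (1 + x) - log (1 - x)) / (2 * log 2)) x := by
  have hp : HasDerivAt (fun y : ℝ => (1 + y) / 2) (1 / 2) x := by
    simpa using ((hasDerivAt_id x).const_add 1).div_const 2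
  have hb := ((hasDerivAt_binEntropy (p := (1 + x) / 2) (by linarith [hx.1])
    (by linarith [hx.2])).comp x hp).div_const (log 2)
  rw [funext hFun_eq_binEntropy]
  refine hb.congr_deriv ?_
  rw [show 1 - (1 + x) / 2 = (1 - x) / 2 by ring, log_div (by linarith [hx.2]) two_ne_zero,
    log_div (by linarith [hx.1]) two_ne_zero]
  ring

lemma two_mul_le_log_one_add_sub_log_one_sub {s : ℝ} (h₀ : 0 ≤ s) (h₁ : s < 1) :
    2 * s ≤ log (1 + s) - log (1 - s) := by
  have h := hasSum_log_sub_log_of_abs_lt_one (abs_lt.2 ⟨by linarith, h₁⟩)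
  simpa using le_hasSum h 0 fun k _ => by positivity

lemma hasDerivAt_sqrt_one_sub_sq {t : ℝ} (ht : t ∈ Ioo (-1) 1) :
    HasDerivAt (fun y => √(1 - y ^ 2)) (-t / √(1 - t ^ 2)) t := by
  have h₀ : 0 < 1 - t ^ 2 := by nlinarith [ht.1, ht.2]
  convert ((hasDerivAt_pow 2 t).const_sub 1).sqrt h₀.ne' using 1
  field_simp
  ring

noncomputable def hSqrt (t : ℝ) : ℝ := hFun (√(1 - t ^ 2))

noncomputable def hSqrtDeriv (t : ℝ) : ℝ :=
  t / √(1 - t ^ 2) * (log (1 + √(1 - t ^ 2)) - log (1 - √(1 - t ^ 2))) / (2 * log 2)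

lemma sqrt_one_sub_sq_mem_Ioo {t : ℝ} (ht : t ∈ Ioo 0 1) : √(1 - t ^ 2) ∈ Ioo 0 1 :=
  ⟨sqrt_pos.2 (by nlinarith [ht.1, ht.2]), (sqrt_lt' one_pos).2 (by nlinarith [ht.1])⟩

lemma hasDerivAt_hSqrt {t : ℝ} (ht : t ∈ Ioo 0 1) : HasDerivAt hSqrt (hSqrtDeriv t) t := by
  obtain ⟨hs₀, hs₁⟩ := sqrt_one_sub_sq_mem_Ioo ht
  have hs2 : √(1 - t ^ 2) ^ 2 = 1 - t ^ 2 := sq_sqrt (by nlinarith [ht.1, ht.2])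
  refine ((hasDerivAt_hFun ⟨by linarith, hs₁⟩).comp t
    (hasDerivAt_sqrt_one_sub_sq ⟨by linarith [ht.1], ht.2⟩)).congr_deriv ?_
  rw [hSqrtDeriv]
  field_simp

lemma hasDerivAt_hSqrtDeriv {t : ℝ} (ht : t ∈ Ioo 0 1) :
    HasDerivAt hSqrtDeriv ((log (1 + √(1 - t ^ 2)) - log (1 - √(1 - t ^ 2)) - 2 * √(1 - t ^ 2))
      / (2 * √(1 - t ^ 2) ^ 3 * log 2)) t := by
  obtain ⟨hs₀, hs₁⟩ := sqrt_one_sub_sq_mem_Ioo ht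
  have hs2 : √(1 - t ^ 2) ^ 2 = 1 - t ^ 2 := sq_sqrt (by nlinarith [ht.1, ht.2])
  have hs := hasDerivAt_sqrt_one_sub_sq ⟨by linarith [ht.1], ht.2⟩
  have hq := (hasDerivAt_id t).div hs hs₀.ne'
  have hL := ((hs.const_add 1).log (by linarith)).sub ((hs.const_sub 1).log (by linarith))
  refine ((hq.mul hL).div_const (2 * log 2)).congr_deriv ?_
  have ht₀ : t ≠ 0 := ht.1.ne'
  have h1 : 1 - √(1 - t ^ 2) ≠ 0 := by linarith
  have h2 : 1 + √(1 - t ^ 2) ≠ 0 := by linarith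
  simp only [Pi.div_apply, Pi.sub_apply, id]
  field_simp
  linear_combination ((1 - √(1 - t ^ 2) ^ 2) * (log (1 + √(1 - t ^ 2)) - log (1 - √(1 - t ^ 2)))
    - 2 * √(1 - t ^ 2)) * hs2

lemma convexOn_hSqrt : ConvexOn ℝ (Icc 0 1) hSqrt := by
  refine convexOn_of_hasDerivWithinAt2_nonneg (f' := hSqrtDeriv)
    (f'' := fun t => (log (1 + √(1 - t ^ 2)) - log (1 - √(1 - t ^ 2)) - 2 * √(1 - t ^ 2))
      / (2 * √(1 - t ^ 2) ^ 3 * log 2)) (convex_Icc 0 1)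
    (continuous_hFun.comp (by fun_prop)).continuousOn (fun t ht => ?_) (fun t ht => ?_)
    (fun t ht => ?_) <;> simp only [interior_Icc] at ht ⊢
  · exact (hasDerivAt_hSqrt ht).hasDerivWithinAt
  · exact (hasDerivAt_hSqrtDeriv ht).hasDerivWithinAt
  · obtain ⟨hs₀, hs₁⟩ := sqrt_one_sub_sq_mem_Ioo ht
    have := two_mul_le_log_one_add_sub_log_one_sub hs₀.le hs₁
    have := log_pos one_lt_two
    exact div_nonneg (by linarith) (by positivity)

lemma monotoneOn_hSqrt : MonotoneOn hSqrt (Icc 0 1) := by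
  have mem : ∀ t ∈ Icc (0 : ℝ) 1, √(1 - t ^ 2) ∈ Icc 0 1 := fun t _ =>
    ⟨sqrt_nonneg _, sqrt_le_one.2 (by nlinarith)⟩
  intro a ha b hb hab
  exact hFun_antitoneOn (mem b hb) (mem a ha)
    (sqrt_le_sqrt (by nlinarith [pow_le_pow_left₀ ha.1 hab 2]))

lemma hSqrt_sqrt_one_sub_sq {y : ℝ} (hy : y ^ 2 ≤ 1) : hSqrt √(1 - y ^ 2) = hFun |y| := by
  rw [hSqrt, sq_sqrt (by linarith), sub_sub_cancel, sqrt_sq_eq_abs]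

section Geometry

variable {κ : Type*} [Fintype κ] {n x z : κ → ℝ}

lemma sq_dotProduct_add_sq_dotProduct_le (hx : x ⬝ᵥ x = 1) (hz : z ⬝ᵥ z = 1)
    (hxz : x ⬝ᵥ z = 0) :
    (n ⬝ᵥ x) ^ 2 + (n ⬝ᵥ z) ^ 2 ≤ n ⬝ᵥ n := by
  set w := n - (n ⬝ᵥ x) • x - (n ⬝ᵥ z) • z with hw
  have h : 0 ≤ w ⬝ᵥ w := Fintype.sum_nonneg fun i => mul_self_nonneg (w i)
  have hzx : z ⬝ᵥ x = 0 := by rw [dotProduct_comm, hxz]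
  rw [hw] at h
  simp only [sub_dotProduct, dotProduct_sub, smul_dotProduct, dotProduct_smul, smul_eq_mul,
    hx, hz, hxz, hzx, dotProduct_comm x n, dotProduct_comm z n] at h
  linarith

lemma dotProduct_self_smul_add_smul_sub (hn : n ⬝ᵥ n = 1) (hx : x ⬝ᵥ x = 1) (c : ℝ) :
    ((n ⬝ᵥ x) • n + c • (x - (n ⬝ᵥ x) • n)) ⬝ᵥ ((n ⬝ᵥ x) • n + c • (x - (n ⬝ᵥ x) • n))
      = (n ⬝ᵥ x) ^ 2 + c ^ 2 * (1 - (n ⬝ᵥ x) ^ 2) := by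
  simp only [add_dotProduct, dotProduct_add, sub_dotProduct, dotProduct_sub, smul_dotProduct,
    dotProduct_smul, smul_eq_mul, hn, hx, dotProduct_comm x n]
  ring

lemma dotProduct_self_smul_add_sqrt_smul_sub_le (hn : n ⬝ᵥ n = 1) (hx : x ⬝ᵥ x = 1)
    (hz : z ⬝ᵥ z = 1) (hxz : x ⬝ᵥ z = 0) {k : ℝ} (hk : k ∈ Icc (-1) 1) :
    ((n ⬝ᵥ x) • n + √(1 - k ^ 2) • (x - (n ⬝ᵥ x) • n)) ⬝ᵥ
      ((n ⬝ᵥ x) • n + √(1 - k ^ 2) • (x - (n ⬝ᵥ x) • n)) ≤ 1 - (k * (n ⬝ᵥ z)) ^ 2 := by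
  have hbessel := sq_dotProduct_add_sq_dotProduct_le (n := n) hx hz hxz
  rw [hn] at hbessel
  rw [dotProduct_self_smul_add_smul_sub hn hx, sq_sqrt (by nlinarith [hk.1, hk.2])]
  nlinarith [mul_nonneg (sq_nonneg k) (sub_nonneg.2 hbessel)]

end Geometry

/-- For orthonormal `x̂, ẑ ∈ ℝ³` and a finite family `(p_m, k_m, n_m)` with
`r_m = (n_m·x̂)n_m + √(1−k_m²)(x̂ − (n_m·x̂)n_m)`, one has
`Σ_m p_m·h(|k_m·(n_m·ẑ)|) ≥ h(√(1 − (Σ_m p_m·‖r_m‖)²))`. -/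
theorem stmt_17 {ι : Type*} [Fintype ι] (xh zh : Fin 3 → ℝ)
    (hx : ∑ i, xh i ^ 2 = 1) (hz : ∑ i, zh i ^ 2 = 1) (hxz : ∑ i, xh i * zh i = 0)
    (p k : ι → ℝ) (n : ι → Fin 3 → ℝ)
    (hp : ∀ m, 0 ≤ p m) (hpsum : ∑ m, p m = 1)
    (hk : ∀ m, k m ∈ Set.Icc (-1 : ℝ) 1) (hn : ∀ m, ∑ i, n m i ^ 2 = 1)
    (r : ι → Fin 3 → ℝ)
    (hr : ∀ m, r m = (∑ i, n m i * xh i) • n m +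
        Real.sqrt (1 - k m ^ 2) • (xh - (∑ i, n m i * xh i) • n m)) :
    hFun (Real.sqrt (1 - (∑ m, p m * Real.sqrt (∑ i, r m i ^ 2)) ^ 2)) ≤
      ∑ m, p m * hFun |k m * ∑ i, n m i * zh i| := by
  have dot_self (v : Fin 3 → ℝ) : ∑ i, v i ^ 2 = v ⬝ᵥ v := by simp only [dotProduct, sq]
  have hr_le (m : ι) : ∑ i, r m i ^ 2 ≤ 1 - (k m * ∑ i, n m i * zh i) ^ 2 := by
    rw [dot_self, hr m]
    exact dotProduct_self_smul_add_sqrt_smul_sub_le (by rw [← dot_self, hn m])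
      (by rw [← dot_self, hx]) (by rw [← dot_self, hz]) hxz (hk m)
  have hkz (m : ι) : (k m * ∑ i, n m i * zh i) ^ 2 ≤ 1 := by
    linarith [hr_le m, Finset.sum_nonneg fun i (_ : i ∈ Finset.univ) => sq_nonneg (r m i)]
  set t : ι → ℝ := fun m => √(1 - (k m * ∑ i, n m i * zh i) ^ 2)
  have ht (m : ι) : t m ∈ Icc 0 1 := ⟨sqrt_nonneg _, sqrt_le_one.2 (by nlinarith)⟩
  have hrt (m : ι) : √(∑ i, r m i ^ 2) ≤ t m := sqrt_le_sqrt (hr_le m)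
  have mean_mem {u : ι → ℝ} (hu : ∀ m, u m ∈ Icc 0 1) : ∑ m, p m * u m ∈ Icc 0 1 := by
    simpa using (convex_Icc (0 : ℝ) 1).sum_mem (fun m _ => hp m) hpsum fun m _ => hu m
  calc hSqrt (∑ m, p m * √(∑ i, r m i ^ 2))
      ≤ hSqrt (∑ m, p m * t m) :=
        monotoneOn_hSqrt (mean_mem fun m => ⟨sqrt_nonneg _, (hrt m).trans (ht m).2⟩)
          (mean_mem ht) (Finset.sum_le_sum fun m _ => mul_le_mul_of_nonneg_left (hrt m) (hp m))
    _ ≤ ∑ m, p m * hSqrt (t m) :=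
        convexOn_hSqrt.map_sum_le (fun m _ => hp m) hpsum fun m _ => ht m
    _ = ∑ m, p m * hFun |k m * ∑ i, n m i * zh i| := by
        simp only [t, hSqrt_sqrt_one_sub_sq (hkz _)]
end

section
/- Let (M_m)_m be a POVM on ℂ^d, let (τ_m)_m be d×d density matrices (the states prepared by a measure-and-prepare instrument after an arbitrary correction), and let B be an observable with orthonormal eigenbasis (|b⟩)_b of ℂ^d. Define the joint distribution p(b, b') = (1/d)·Σ_m ⟨b|M_m|b⟩·⟨b'|τ_m|b'⟩. Then the corrected disturbance D_E(M,B) = H(𝔹|𝔹') computed from p(b,b') satisfies D_E(M,B) ≥ N(M,B). (That is, for measure-and-prepare instruments the disturbance on B is at least the noise on B, for any correction.) -/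
open Matrix
open scoped ComplexOrder

/-!
Write `p(b, m) = ⟨b|M_m|b⟩ / d` for the joint distribution of the eigenvalue of `B` and the
outcome of `M` on the maximally mixed state, so that `N(M,B) = H(𝔹|𝕄)`. The prepared states act
as a classical channel `m ↦ ⟨b'|τ_m|b'⟩` producing `𝔹'` from `𝕄`, so `𝔹 → 𝕄 → 𝔹'` is a Markov
chain and `H(𝔹|𝕄) ≤ H(𝔹|𝔹')` is the conditional data-processing inequality. The latter follows,
for each pair `(b, b')`, from the log-sum inequality.
-/

open Finset

namespace Real

lemma sub_le_mul_log_div {x y : ℝ} (hx : 0 ≤ x) (hy : 0 ≤ y) (hxy : y = 0 → x = 0) :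
    x - y ≤ x * log (x / y) := by
  rcases hy.eq_or_lt with rfl | hy
  · simp [hxy rfl]
  have hkl : y * InformationTheory.klFun (x / y) = x * log (x / y) + y - x := by
    rw [InformationTheory.klFun_apply]
    field_simp
  linarith [mul_nonneg hy.le (InformationTheory.klFun_nonneg (div_nonneg hx hy.le))]

theorem sum_mul_log_div_sum_le {ι : Type*} [Fintype ι] {w u : ι → ℝ} (hw : ∀ i, 0 ≤ w i)
    (hu : ∀ i, 0 ≤ u i) (hwu : ∀ i, u i = 0 → w i = 0) :
    (∑ i, w i) * log ((∑ i, w i) / ∑ i, u i) ≤ ∑ i, w i * log (w i / u i) := by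
  set W := ∑ i, w i
  set U := ∑ i, u i
  rcases (sum_nonneg fun i _ => hw i : 0 ≤ W).eq_or_lt with hW | hW
  · have hw0 : ∀ i, w i = 0 := fun i =>
      (sum_eq_zero_iff_of_nonneg fun i _ => hw i).1 hW.symm i (mem_univ i)
    simp [show W = 0 from hW.symm, hw0]
  have hU : 0 < U := by
    refine (sum_nonneg fun i _ => hu i).lt_of_ne fun hU => hW.ne' (sum_eq_zero fun i _ => ?_)
    exact hwu i ((sum_eq_zero_iff_of_nonneg fun i _ => hu i).1 hU.symm i (mem_univ i))
  have hc : 0 < W / U := div_pos hW hU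
  have key : ∀ i, w i - u i * (W / U) ≤ w i * log (w i / u i) - w i * log (W / U) := by
    intro i
    convert sub_le_mul_log_div (hw i) (mul_nonneg (hu i) hc.le)
      (fun h => hwu i ((mul_eq_zero.1 h).resolve_right hc.ne')) using 1
    rcases eq_or_ne (w i) 0 with h | h
    · simp [h]
    have hui : u i ≠ 0 := fun h' => h (hwu i h')
    rw [← mul_sub, ← log_div (div_ne_zero h hui) hc.ne', div_div]
  have hsum : ∑ i, (w i - u i * (W / U)) = 0 := by
    rw [sum_sub_distrib, ← sum_mul, mul_div_cancel₀ _ hU.ne', sub_self]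
  have := sum_le_sum fun i (_ : i ∈ univ) => key i
  rw [hsum, sum_sub_distrib, ← sum_mul] at this
  linarith

theorem sum_mul_logb_div_sum_le {ι : Type*} [Fintype ι] {b : ℝ} (hb : 1 ≤ b) {w u : ι → ℝ}
    (hw : ∀ i, 0 ≤ w i) (hu : ∀ i, 0 ≤ u i) (hwu : ∀ i, u i = 0 → w i = 0) :
    (∑ i, w i) * logb b ((∑ i, w i) / ∑ i, u i) ≤ ∑ i, w i * logb b (w i / u i) := by
  simp only [logb, ← mul_div_assoc, ← sum_div]
  exact div_le_div_of_nonneg_right (sum_mul_log_div_sum_le hw hu hwu) (log_nonneg hb)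

end Real

theorem condEnt_le_condEnt_comp {X Y Z : Type*} [Fintype X] [Fintype Y] [Fintype Z]
    {p : X → Y → ℝ} (hp : ∀ x y, 0 ≤ p x y) {κ : Y → Z → ℝ} (hκ : ∀ y z, 0 ≤ κ y z)
    (hκ1 : ∀ y, ∑ z, κ y z = 1) :
    condEnt p ≤ condEnt (fun x z => ∑ y, p x y * κ y z) := by
  rw [condEnt, condEnt, neg_le_neg_iff]
  calc ∑ x, ∑ z, (∑ y, p x y * κ y z) *
        Real.logb 2 ((∑ y, p x y * κ y z) / ∑ x', ∑ y, p x' y * κ y z)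
      ≤ ∑ x, ∑ z, ∑ y, p x y * κ y z * Real.logb 2 (p x y / ∑ x', p x' y) := by
        gcongr with x _ z _
        have hmarg : ∑ x', ∑ y, p x' y * κ y z = ∑ y, (∑ x', p x' y) * κ y z := by
          rw [sum_comm]
          simp_rw [sum_mul]
        have hsupp (y : Y) (h : (∑ x', p x' y) * κ y z = 0) : p x y * κ y z = 0 := by
          rcases mul_eq_zero.1 h with h | h
          · rw [(sum_eq_zero_iff_of_nonneg fun x' _ => hp x' y).1 h x (mem_univ x), zero_mul]
          · rw [h, mul_zero]
        rw [hmarg]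
        refine (Real.sum_mul_logb_div_sum_le one_le_two (fun y => mul_nonneg (hp x y) (hκ y z))
          (fun y => mul_nonneg (sum_nonneg fun x' _ => hp x' y) (hκ y z)) hsupp).trans_eq
          (sum_congr rfl fun y _ => ?_)
        rcases eq_or_ne (κ y z) 0 with h | h
        · simp [h]
        · rw [mul_div_mul_right _ _ h]
    _ = ∑ x, ∑ y, p x y * Real.logb 2 (p x y / ∑ x', p x' y) := by
        refine sum_congr rfl fun x _ => ?_
        rw [sum_comm]
        refine sum_congr rfl fun y _ => ?_
        rw [← sum_mul, ← mul_sum, hκ1, mul_one]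

lemma Matrix.PosSemidef.qform_nonneg {d : ℕ} {X : Matrix (Fin d) (Fin d) ℂ} (hX : X.PosSemidef)
    (v : Fin d → ℂ) : 0 ≤ qform X v :=
  (Complex.nonneg_iff.1 (hX.dotProduct_mulVec_nonneg v)).1

-- The matrix `U` with columns `v b` satisfies `Uᴴ U = 1`, hence `U Uᴴ = 1`, so the diagonal
-- entries `⟨b|X|b⟩` of `Uᴴ X U` sum to `tr (X U Uᴴ) = tr X`.
lemma IsONB.sum_qform {d : ℕ} {v : Fin d → Fin d → ℂ} (hv : IsONB v)
    (X : Matrix (Fin d) (Fin d) ℂ) : ∑ b, qform X (v b) = X.trace.re := by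
  set U : Matrix (Fin d) (Fin d) ℂ := (Matrix.of v)ᵀ
  have hU : Uᴴ * U = 1 := by
    ext a b
    simpa [U, Matrix.mul_apply, dotProduct, Matrix.one_apply] using hv a b
  have hdiag (b : Fin d) : star (v b) ⬝ᵥ X *ᵥ v b = (Uᴴ * X * U) b b := by
    simp only [U, Matrix.mul_apply, Matrix.mulVec, dotProduct, mul_sum, sum_mul,
      Matrix.conjTranspose_apply, Matrix.transpose_apply, Matrix.of_apply, Pi.star_apply]
    rw [sum_comm]
    exact sum_congr rfl fun _ _ => sum_congr rfl fun _ _ => by ring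
  calc ∑ b, qform X (v b) = (Uᴴ * X * U).trace.re := by
        simp only [qform, hdiag, Matrix.trace, Matrix.diag, Complex.re_sum]
    _ = X.trace.re := by rw [Matrix.trace_mul_cycle, mul_eq_one_comm.1 hU, one_mul]

theorem stmt_19_general {d : ℕ} {ι : Type*} [Fintype ι]
    (M : ι → Matrix (Fin d) (Fin d) ℂ) (hM : IsPOVM M)
    (τ : ι → Matrix (Fin d) (Fin d) ℂ) (hτ : ∀ m, IsDensity (τ m))
    (vB : Fin d → Fin d → ℂ) (hB : IsONB vB) :
    noise M vB ≤ condEnt (fun b b' : Fin d =>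
      (1 / (d : ℝ)) * ∑ m, qform (M m) (vB b) * qform (τ m) (vB b')) := by
  have hnoise : noise M vB = condEnt fun b m => 1 / (d : ℝ) * qform (M m) (vB b) := by
    rw [noise, condEnt, sum_comm]
    simp_rw [← mul_sum, hB.sum_qform]
  have hjoint : (fun b b' : Fin d => 1 / (d : ℝ) * ∑ m, qform (M m) (vB b) * qform (τ m) (vB b'))
      = fun b b' => ∑ m, 1 / (d : ℝ) * qform (M m) (vB b) * qform (τ m) (vB b') := by
    simp_rw [mul_sum, mul_assoc]
  rw [hnoise, hjoint]
  exact condEnt_le_condEnt_comp (fun b m => mul_nonneg (by positivity) ((hM.1 m).qform_nonneg _))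
    (fun m b' => (hτ m).1.qform_nonneg _)
    fun m => by rw [hB.sum_qform, (hτ m).2, Complex.one_re]

/-- For a measure-and-prepare instrument given by a POVM `(M_m)` and prepared states `(τ_m)`,
with joint distribution `p(b,b') = (1/d)·Σ_m ⟨b|M_m|b⟩·⟨b'|τ_m|b'⟩`, the corrected disturbance
`D_E(M,B) = H(𝔹|𝔹')` satisfies `D_E(M,B) ≥ N(M,B)`. -/
theorem stmt_19 {d : ℕ} (hd : 0 < d) {ι : Type*} [Fintype ι]
    (M : ι → Matrix (Fin d) (Fin d) ℂ) (hM : IsPOVM M)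
    (τ : ι → Matrix (Fin d) (Fin d) ℂ) (hτ : ∀ m, IsDensity (τ m))
    (vB : Fin d → Fin d → ℂ) (hB : IsONB vB) :
    noise M vB ≤ condEnt (fun b b' : Fin d =>
      (1 / (d : ℝ)) * ∑ m, qform (M m) (vB b) * qform (τ m) (vB b')) :=
  stmt_19_general M hM τ hτ vB hB
end
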